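/- Let V : ℝ^d × P(ℝ^d × ℝ^d) → ℝ be monotone in the Lasry–Lions sense, i.e., ∫ (V(x,μ₁) − V(x,μ₂)) d(μ₁ − μ₂)(x,α) ≥ 0 for all probability measures μ₁, μ₂ on ℝ^d × ℝ^d. Fix β ≥ 0 and define L(x,α,μ) = |α + β ∫ γ dμ(y,γ)|²/2 + V(x,μ). Then L satisfies the Lasry–Lions monotonicity condition: for all compactly supported probability measures μ₁, μ₂ on ℝ^d × ℝ^d, ∫ (L(x,α,μ₁) − L(x,α,μ₂)) d(μ₁ − μ₂)(x,α) ≥ 0. -/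

import Mathlib

/-!
Expanding the square, `L(·, μ₁) - L(·, μ₂)` is the monotone coupling `V(·, μ₁) - V(·, μ₂)`
plus an affine function `⟪β (m₁ - m₂), α⟫ + const` of the control, where `mᵢ = ∫ γ dμᵢ`.
Against `μ₁ - μ₂` the constant integrates to zero and the linear part to `β ‖m₁ - m₂‖² ≥ 0`.
Compact support makes the control integrable, so `mᵢ` is its true mean.
-/

open MeasureTheory

open scoped RealInnerProductSpace

theorem Continuous.integrable_of_isCompact_of_measure_compl_eq_zero
    {X E : Type*} [MeasurableSpace X] [TopologicalSpace X] [OpensMeasurableSpace X]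
    [NormedAddCommGroup E] [SecondCountableTopologyEither X E] {μ : Measure X}
    [IsFiniteMeasure μ] {f : X → E} (hf : Continuous f) {K : Set X} (hK : IsCompact K)
    (h0 : μ Kᶜ = 0) : Integrable f μ := by
  obtain ⟨C, hC⟩ := hK.exists_bound_of_continuousOn hf.continuousOn
  have hK_ae : ∀ᵐ x ∂μ, x ∈ K :=
    (measure_eq_zero_iff_ae_notMem.mp h0).mono fun _ h => not_not.mp h
  exact (integrable_const C).mono' hf.aestronglyMeasurable (hK_ae.mono hC)

theorem half_norm_add_sq_sub_half_norm_add_sq {E : Type*} [NormedAddCommGroup E]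
    [InnerProductSpace ℝ E] (x u v : E) :
    ‖x + u‖ ^ 2 / 2 - ‖x + v‖ ^ 2 / 2 = ⟪u - v, x⟫ + (‖u‖ ^ 2 - ‖v‖ ^ 2) / 2 := by
  rw [norm_add_sq_real, norm_add_sq_real, inner_sub_left, real_inner_comm u, real_inner_comm v]
  ring

theorem integral_inner_add_const_sub_integral_inner_add_const {X E : Type*}
    [MeasurableSpace X] [NormedAddCommGroup E] [InnerProductSpace ℝ E] [CompleteSpace E]
    {μ₁ μ₂ : Measure X} [IsProbabilityMeasure μ₁] [IsProbabilityMeasure μ₂] {g : X → E}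
    (hg₁ : Integrable g μ₁) (hg₂ : Integrable g μ₂) (c : E) (k : ℝ) :
    (∫ x, (⟪c, g x⟫ + k) ∂μ₁) - ∫ x, (⟪c, g x⟫ + k) ∂μ₂ = ⟪c, (∫ x, g x ∂μ₁) - ∫ x, g x ∂μ₂⟫ := by
  rw [integral_add (hg₁.const_inner c) (integrable_const k),
    integral_add (hg₂.const_inner c) (integrable_const k), integral_inner hg₁, integral_inner hg₂,
    inner_sub_right]
  simp

/-- If `V` is Lasry-Lions monotone, then
`L(x,α,μ) = ‖α + β ∫ γ dμ‖²/2 + V(x,μ)` is Lasry-Lions monotone. -/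
theorem stmt3 (d : ℕ) (β : ℝ) (hβ : 0 ≤ β)
    (V : EuclideanSpace ℝ (Fin d) →
      Measure (EuclideanSpace ℝ (Fin d) × EuclideanSpace ℝ (Fin d)) → ℝ)
    (hVmono : ∀ μ₁ μ₂ : Measure (EuclideanSpace ℝ (Fin d) × EuclideanSpace ℝ (Fin d)),
      IsProbabilityMeasure μ₁ → IsProbabilityMeasure μ₂ →
      0 ≤ (∫ p, (V p.1 μ₁ - V p.1 μ₂) ∂μ₁) - (∫ p, (V p.1 μ₁ - V p.1 μ₂) ∂μ₂))
    (μ₁ μ₂ : Measure (EuclideanSpace ℝ (Fin d) × EuclideanSpace ℝ (Fin d)))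
    (h₁ : IsProbabilityMeasure μ₁) (h₂ : IsProbabilityMeasure μ₂)
    -- compact support
    (hc₁ : ∃ K, IsCompact K ∧ μ₁ Kᶜ = 0) (hc₂ : ∃ K, IsCompact K ∧ μ₂ Kᶜ = 0)
    -- integrability of the coupling terms
    (hV : ∀ μ ∈ ({μ₁, μ₂} : Set (Measure _)), ∀ ν ∈ ({μ₁, μ₂} : Set (Measure _)),
      Integrable (fun p => V p.1 ν) μ)
    (L : Measure (EuclideanSpace ℝ (Fin d) × EuclideanSpace ℝ (Fin d)) →
      EuclideanSpace ℝ (Fin d) × EuclideanSpace ℝ (Fin d) → ℝ)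
    (hL : ∀ μ p, L μ p = ‖p.2 + β • (∫ q, q.2 ∂μ)‖ ^ 2 / 2 + V p.1 μ) :
    0 ≤ (∫ p, (L μ₁ p - L μ₂ p) ∂μ₁) - (∫ p, (L μ₁ p - L μ₂ p) ∂μ₂) := by
  obtain ⟨K₁, hK₁, hn₁⟩ := hc₁
  obtain ⟨K₂, hK₂, hn₂⟩ := hc₂
  have hsnd₁ := continuous_snd.integrable_of_isCompact_of_measure_compl_eq_zero hK₁ hn₁
  have hsnd₂ := continuous_snd.integrable_of_isCompact_of_measure_compl_eq_zero hK₂ hn₂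
  set m₁ := ∫ q, q.2 ∂μ₁
  set m₂ := ∫ q, q.2 ∂μ₂
  set c := β • m₁ - β • m₂
  set k := (‖β • m₁‖ ^ 2 - ‖β • m₂‖ ^ 2) / 2
  have hsplit : ∀ p, L μ₁ p - L μ₂ p = (⟪c, p.2⟫ + k) + (V p.1 μ₁ - V p.1 μ₂) := fun p => by
    rw [hL, hL]
    linear_combination half_norm_add_sq_sub_half_norm_add_sq p.2 (β • m₁) (β • m₂)
  have hVint : ∀ μ ∈ ({μ₁, μ₂} : Set (Measure _)),
      Integrable (fun p => V p.1 μ₁ - V p.1 μ₂) μ :=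
    fun μ hμ => (hV μ hμ μ₁ (by simp)).sub (hV μ hμ μ₂ (by simp))
  have haff : ∀ (μ : Measure _) [IsFiniteMeasure μ],
      Integrable (fun p : EuclideanSpace ℝ (Fin d) × _ => p.2) μ →
      Integrable (fun p => ⟪c, p.2⟫ + k) μ :=
    fun _ _ h => (h.const_inner c).add (integrable_const k)
  have hquad : ⟪c, m₁ - m₂⟫ = β * ‖m₁ - m₂‖ ^ 2 := by
    rw [show c = β • (m₁ - m₂) from (smul_sub β m₁ m₂).symm, real_inner_smul_left,
      real_inner_self_eq_norm_sq]
  simp_rw [hsplit]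
  rw [integral_add (haff μ₁ hsnd₁) (hVint μ₁ (by simp)),
    integral_add (haff μ₂ hsnd₂) (hVint μ₂ (by simp))]
  have hpair := integral_inner_add_const_sub_integral_inner_add_const hsnd₁ hsnd₂ c k
  have hVpair := hVmono μ₁ μ₂ h₁ h₂
  linarith [mul_nonneg hβ (sq_nonneg ‖m₁ - m₂‖)]
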